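/- Fix n ≥ 1, binary vectors a, b ∈ F_2^n, and integers m, w with wt(a) = w. The number of vectors x ∈ F_4^n of Hamming weight m satisfying d(x, c) ≤ m (where c ∈ F_4^n has weight w, x and c viewed in F_4^n) equals G(m,w) = Σ_{t=0}^{m} C(w,t) 2^t Σ_{h=⌈(w-t)/2⌉}^{m-t} C(w-t, h) C(n-w, m-t-h) 3^{m-t-h}. -/

import Mathlib

/-!
Sort the coordinates of `x` relative to `c` into the set `T` on the support of `c` where `x` is
nonzero and differs from `c`, the set `H` where `x` agrees with `c` on its support, and the set `O`
off the support of `c` where `x` is nonzero. Then `wt x = |T| + |H| + |O|` and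
`d(x, c) + |H| = wt c + |O|`, so `d(x, c) ≤ wt x` reads `w ≤ |T| + 2|H|`. A pattern `(T, H, O)`
is realized by exactly `(q - 2)^|T| (q - 1)^|O|` vectors over an alphabet of size `q`: any
nonzero value other than `c i` on `T`, any nonzero value on `O`. Counting the patterns by their
cardinalities gives `G`.
-/

open scoped Classical

/-- `G(m,w) = Σ_{t=0}^{m} C(w,t) 2^t Σ_{h=⌈(w-t)/2⌉}^{m-t} C(w-t,h) C(n-w,m-t-h) 3^{m-t-h}`. -/
def G (n m w : ℕ) : ℕ :=
  ∑ t ∈ Finset.range (m+1), w.choose t * 2^t *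
    ∑ h ∈ Finset.Icc ((w - t + 1)/2) (m - t),
      (w - t).choose h * (n - w).choose (m - t - h) * 3^(m - t - h)

open Finset

section BinomialSums

theorem sum_powerset_sdiff_powerset_apply_card {β M : Type*} [DecidableEq β] [AddCommMonoid M]
    (S U : Finset β) (f : ℕ → ℕ → ℕ → M) :
    ∑ T ∈ S.powerset, ∑ H ∈ (S \ T).powerset, ∑ O ∈ U.powerset, f #T #H #O =
      ∑ t ∈ range (#S + 1), (#S).choose t • ∑ h ∈ range (#S - t + 1), (#S - t).choose h •
        ∑ o ∈ range (#U + 1), (#U).choose o • f t h o := by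
  rw [← sum_powerset_apply_card]
  refine sum_congr rfl fun T hT => ?_
  rw [← card_sdiff_of_subset (mem_powerset.1 hT), ← sum_powerset_apply_card]
  exact sum_congr rfl fun H _ => sum_powerset_apply_card (f #T #H)

theorem sum_range_choose_mul_eq_of_vanish {r m : ℕ} {f : ℕ → ℕ} (hf : ∀ k, m < k → f k = 0) :
    ∑ k ∈ range (r + 1), r.choose k * f k = ∑ k ∈ range (m + 1), r.choose k * f k :=
  calc ∑ k ∈ range (r + 1), r.choose k * f k
      = ∑ k ∈ range (r + m + 1), r.choose k * f k :=
        sum_subset (range_subset_range.2 (by omega)) fun k _ hk => by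
          rw [Nat.choose_eq_zero_of_lt (by simp only [mem_range] at hk; omega), zero_mul]
    _ = ∑ k ∈ range (m + 1), r.choose k * f k :=
        (sum_subset (range_subset_range.2 (by omega)) fun k _ hk => by
          rw [hf k (by simp only [mem_range] at hk; omega), mul_zero]).symm

theorem sum_choose_mul_ite_eq_sum_Icc (w r m a b : ℕ) :
    ∑ t ∈ range (w + 1), w.choose t * ∑ h ∈ range (w - t + 1), (w - t).choose h *
      ∑ o ∈ range (r + 1), r.choose o * (if t + h + o = m ∧ w ≤ t + 2 * h then a ^ t * b ^ o else 0)
    = ∑ t ∈ range (m + 1), w.choose t * a ^ t * ∑ h ∈ Icc ((w - t + 1) / 2) (m - t),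
      (w - t).choose h * r.choose (m - t - h) * b ^ (m - t - h) := by
  have hcollapse : ∀ t h, ∑ o ∈ range (r + 1), r.choose o *
      (if t + h + o = m ∧ w ≤ t + 2 * h then a ^ t * b ^ o else 0) =
      if t + h ≤ m ∧ w ≤ t + 2 * h then r.choose (m - t - h) * (a ^ t * b ^ (m - t - h))
      else 0 := by
    intro t h
    rw [sum_eq_single (m - t - h)]
    · split_ifs <;> first | rfl | omega
    · intro o _ ho
      rw [if_neg (by omega), mul_zero]
    · intro hmem
      rw [Nat.choose_eq_zero_of_lt (by simp only [mem_range] at hmem; omega), zero_mul]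
  simp only [hcollapse]
  rw [sum_range_choose_mul_eq_of_vanish (m := m)]
  · refine sum_congr rfl fun t ht => ?_
    have hIcc : Icc ((w - t + 1) / 2) (m - t) =
        {h ∈ range (m + 1) | t + h ≤ m ∧ w ≤ t + 2 * h} := by
      ext h; simp only [mem_Icc, mem_filter, mem_range]; have := mem_range.1 ht; omega
    rw [sum_range_choose_mul_eq_of_vanish (m := m), hIcc, sum_filter, mul_sum, mul_sum]
    · exact sum_congr rfl fun h _ => by split_ifs <;> ring
    · intro h hh
      rw [if_neg (by omega)]
  · intro t ht
    refine sum_eq_zero fun h _ => ?_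
    rw [if_neg (by omega), mul_zero]

end BinomialSums

section HammingPattern

variable {ι α : Type*} [Fintype ι] [DecidableEq α] [Zero α]

-- The sets `(T, H, O)` of the paper's count, of sizes `t`, `h` and `m - h - t`.
def hammingPattern (c x : ι → α) : Finset ι × Finset ι × Finset ι :=
  (({i | c i ≠ 0 ∧ x i ≠ 0 ∧ x i ≠ c i} : Finset ι), ({i | c i ≠ 0 ∧ x i = c i} : Finset ι),
    ({i | c i = 0 ∧ x i ≠ 0} : Finset ι))

theorem hammingNorm_eq_card_hammingPattern (c x : ι → α) :
    hammingNorm x = #(hammingPattern c x).1 + #(hammingPattern c x).2.1 +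
      #(hammingPattern c x).2.2 := by
  simp only [hammingNorm, hammingPattern, card_filter, ← sum_add_distrib]
  refine sum_congr rfl fun i _ => ?_
  split_ifs <;> simp_all

theorem hammingDist_add_card_hammingPattern (c x : ι → α) :
    hammingDist x c + #(hammingPattern c x).2.1 = hammingNorm c + #(hammingPattern c x).2.2 := by
  simp only [hammingDist, hammingNorm, hammingPattern, card_filter, ← sum_add_distrib]
  refine sum_congr rfl fun i _ => ?_
  split_ifs <;> simp_all

theorem hammingNorm_eq_and_hammingDist_le_iff (c x : ι → α) (m : ℕ) :
    hammingNorm x = m ∧ hammingDist x c ≤ m ↔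
      #(hammingPattern c x).1 + #(hammingPattern c x).2.1 + #(hammingPattern c x).2.2 = m ∧
        hammingNorm c ≤ #(hammingPattern c x).1 + 2 * #(hammingPattern c x).2.1 := by
  have := hammingNorm_eq_card_hammingPattern c x
  have := hammingDist_add_card_hammingPattern c x
  omega

theorem disjoint_hammingPattern (c x : ι → α) :
    Disjoint (hammingPattern c x).1 (hammingPattern c x).2.1 := by
  simp +contextual [hammingPattern, disjoint_left]

variable [DecidableEq ι] [Fintype α]

def hammingPatternValues (c : ι → α) (T H O : Finset ι) (i : ι) : Finset α :=
  {a | (c i ≠ 0 ∧ a ≠ 0 ∧ a ≠ c i ↔ i ∈ T) ∧ (c i ≠ 0 ∧ a = c i ↔ i ∈ H) ∧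
    (c i = 0 ∧ a ≠ 0 ↔ i ∈ O)}

theorem filter_hammingPattern_eq_piFinset (c : ι → α) (T H O : Finset ι) :
    ({x | hammingPattern c x = (T, H, O)} : Finset (ι → α)) =
      Fintype.piFinset (hammingPatternValues c T H O) := by
  ext x
  simp [hammingPattern, hammingPatternValues, Prod.ext_iff, Finset.ext_iff, forall_and]

theorem card_filter_ne_zero_eq : #{a : α | a ≠ 0} = Fintype.card α - 1 := by
  rw [filter_ne', card_erase_of_mem (mem_univ 0), card_univ]

theorem card_filter_ne_zero_and_ne {b : α} (hb : b ≠ 0) :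
    #{a : α | a ≠ 0 ∧ a ≠ b} = Fintype.card α - 2 := by
  have : ({a | a ≠ 0 ∧ a ≠ b} : Finset α) = (univ.erase 0).erase b := by
    ext a; simp [and_comm]
  rw [this, card_erase_of_mem (mem_erase.2 ⟨hb, mem_univ b⟩), card_erase_of_mem (mem_univ 0),
    card_univ, Nat.sub_sub]

theorem card_hammingPatternValues {c : ι → α} {T H O : Finset ι}
    (hT : T ⊆ ({i | c i ≠ 0} : Finset ι)) (hH : H ⊆ ({i | c i ≠ 0} : Finset ι) \ T)
    (hO : O ⊆ ({i | c i ≠ 0} : Finset ι)ᶜ) (i : ι) :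
    #(hammingPatternValues c T H O i) =
      (if i ∈ T then Fintype.card α - 2 else 1) * (if i ∈ O then Fintype.card α - 1 else 1) := by
  by_cases hiT : i ∈ T
  · have hci : c i ≠ 0 := by simpa using hT hiT
    have hiH : i ∉ H := fun hiH => (mem_sdiff.1 (hH hiH)).2 hiT
    have hiO : i ∉ O := fun hiO => by simpa [hci] using hO hiO
    rw [← card_filter_ne_zero_and_ne hci]
    simp [hammingPatternValues, hci, hiT, hiH, hiO]
  by_cases hiH : i ∈ H
  · have hci : c i ≠ 0 := by simpa using (mem_sdiff.1 (hH hiH)).1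
    have hiO : i ∉ O := fun hiO => by simpa [hci] using hO hiO
    rw [if_neg hiT, if_neg hiO, mul_one, card_eq_one]
    refine ⟨c i, ?_⟩
    ext a
    by_cases ha : a = c i <;> simp [hammingPatternValues, hci, hiT, hiH, hiO, ha]
  by_cases hiO : i ∈ O
  · have hci : c i = 0 := by simpa using hO hiO
    rw [if_neg hiT, if_pos hiO, one_mul, ← card_filter_ne_zero_eq]
    simp [hammingPatternValues, hci, hiT, hiH, hiO]
  · rw [if_neg hiT, if_neg hiO, mul_one, card_eq_one]
    refine ⟨0, ?_⟩
    ext a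
    by_cases ha : a = 0 <;> by_cases hac : a = c i <;> simp_all [hammingPatternValues]

theorem card_filter_hammingPattern_eq {c : ι → α} {T H O : Finset ι}
    (hT : T ⊆ ({i | c i ≠ 0} : Finset ι)) (hH : H ⊆ ({i | c i ≠ 0} : Finset ι) \ T)
    (hO : O ⊆ ({i | c i ≠ 0} : Finset ι)ᶜ) :
    #{x | hammingPattern c x = (T, H, O)} =
      (Fintype.card α - 2) ^ #T * (Fintype.card α - 1) ^ #O := by
  rw [filter_hammingPattern_eq_piFinset, Fintype.card_piFinset,
    prod_congr rfl fun i _ => card_hammingPatternValues hT hH hO i, prod_mul_distrib,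
    prod_ite_mem, prod_ite_mem, univ_inter, univ_inter, prod_const, prod_const]

theorem card_filter_hammingPattern_eq_sum (c : ι → α) (Q : Finset ι × Finset ι × Finset ι → Prop)
    [DecidablePred Q] :
    #{x : ι → α | Q (hammingPattern c x)} =
      ∑ T ∈ ({i | c i ≠ 0} : Finset ι).powerset, ∑ H ∈ (({i | c i ≠ 0} : Finset ι) \ T).powerset,
        ∑ O ∈ ({i | c i ≠ 0} : Finset ι)ᶜ.powerset,
          if Q (T, H, O) then #{x : ι → α | hammingPattern c x = (T, H, O)} else 0 := by
  set S : Finset ι := {i | c i ≠ 0}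
  have hmaps : ∀ x : ι → α, hammingPattern c x ∈ S.powerset ×ˢ S.powerset ×ˢ Sᶜ.powerset := by
    intro x
    simp +contextual [S, hammingPattern, subset_iff]
  have hfiber : ∀ p, #{x ∈ ({x | Q (hammingPattern c x)} : Finset (ι → α)) |
      hammingPattern c x = p} = if Q p then #{x : ι → α | hammingPattern c x = p} else 0 := by
    intro p
    rw [filter_filter]
    split_ifs with hQ
    · exact congrArg card (filter_congr fun x _ => ⟨And.right, fun hx => ⟨hx ▸ hQ, hx⟩⟩)
    · rw [card_eq_zero, filter_eq_empty_iff]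
      rintro x - ⟨hx, rfl⟩
      exact hQ hx
  rw [card_eq_sum_card_fiberwise fun x _ => hmaps x, sum_product]
  refine sum_congr rfl fun T _ => ?_
  rw [sum_product]
  simp only [hfiber]
  refine (sum_subset (powerset_mono.2 sdiff_subset) fun H hHS hHT => ?_).symm
  have hTH : ¬Disjoint T H := fun hd =>
    hHT (mem_powerset.2 (subset_sdiff.2 ⟨mem_powerset.1 hHS, hd.symm⟩))
  refine sum_eq_zero fun O _ => ?_
  rw [ite_eq_right_iff, card_eq_zero, filter_eq_empty_iff]
  intro _ x _ hx
  have := disjoint_hammingPattern c x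
  rw [hx] at this
  exact hTH this

theorem card_hammingNorm_eq_hammingDist_le {c : ι → α} {w : ℕ} (hc : hammingNorm c = w)
    (m : ℕ) :
    #{x : ι → α | hammingNorm x = m ∧ hammingDist x c ≤ m} =
      ∑ t ∈ range (m + 1), w.choose t * (Fintype.card α - 2) ^ t *
        ∑ h ∈ Icc ((w - t + 1) / 2) (m - t), (w - t).choose h *
          (Fintype.card ι - w).choose (m - t - h) * (Fintype.card α - 1) ^ (m - t - h) := by
  set S : Finset ι := {i | c i ≠ 0}
  have hS : #S = w := hc
  have hfibers : ∀ T ∈ S.powerset, ∀ H ∈ (S \ T).powerset, ∀ O ∈ Sᶜ.powerset,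
      #{x : ι → α | hammingPattern c x = (T, H, O)} =
        (Fintype.card α - 2) ^ #T * (Fintype.card α - 1) ^ #O := fun T hT H hH O hO =>
    card_filter_hammingPattern_eq (mem_powerset.1 hT) (mem_powerset.1 hH) (mem_powerset.1 hO)
  rw [filter_congr fun x _ => hammingNorm_eq_and_hammingDist_le_iff c x m, hc,
    card_filter_hammingPattern_eq_sum c fun p => #p.1 + #p.2.1 + #p.2.2 = m ∧ w ≤ #p.1 + 2 * #p.2.1,
    sum_congr rfl fun T hT => sum_congr rfl fun H hH => sum_congr rfl fun O hO => by
      rw [hfibers T hT H hH O hO],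
    sum_powerset_sdiff_powerset_apply_card S Sᶜ fun t h o =>
      if t + h + o = m ∧ w ≤ t + 2 * h then
        (Fintype.card α - 2) ^ t * (Fintype.card α - 1) ^ o else 0]
  simp only [smul_eq_mul]
  rw [card_compl, hS, sum_choose_mul_ite_eq_sum_Icc]

end HammingPattern

theorem count_close_vectors (n m w : ℕ)
    (c : Fin n → GaloisField 2 2) (hc : hammingNorm c = w) :
    Nat.card {x : Fin n → GaloisField 2 2 //
        hammingNorm x = m ∧ hammingDist x c ≤ m}
      = G n m w := by
  have : Fintype (GaloisField 2 2) := Fintype.ofFinite _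
  have hq : Fintype.card (GaloisField 2 2) = 4 := by
    rw [← Nat.card_eq_fintype_card, GaloisField.card 2 2 two_ne_zero]
    rfl
  rw [Nat.card_eq_fintype_card, Fintype.card_subtype, card_hammingNorm_eq_hammingDist_le hc,
    hq, Fintype.card_fin]
  rfl
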